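/- Let H be a Hilbert space, 𝒜 a C*-subalgebra of B(H) containing K(H), let A₁,…,Aₘ, B₁,…,Bₘ ∈ 𝒜 and Φ = Σ_{i=1}^m M_{A_i,B_i} : 𝒜 → 𝒜. If B₁,…,Bₘ are linearly independent, then there exist a positive integer r and a constant C > 0 such that for every n ≥ 1 and every i = 1,…,m one has a_{rn−r+1}(A_i) ≤ C · hₙ(Φ). In particular, if 𝔦 is a Calkin space and (hₙ(Φ))_{n≥1} ∈ 𝔦, then (aₙ(A_i))_{n≥1} ∈ 𝔦 for every i = 1,…,m. -/

import Mathlib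

open scoped BigOperators

noncomputable section

/-- The space of complex null sequences `c₀`. -/
def c0 : Set (ℕ → ℂ) := {α | Filter.Tendsto α Filter.atTop (nhds 0)}

/-- `rearrSum α n` is the supremum of `∑_{i ∈ F} |α i|` over finite sets `F ⊆ ℕ` with
`|F| = n`; for a null sequence it equals `α*₁ + ⋯ + α*ₙ` where `α*` is the decreasing
rearrangement of `(|α_n|)`. -/
def rearrSum (α : ℕ → ℂ) (n : ℕ) : ℝ :=
  sSup ((fun F : Finset ℕ => ∑ i ∈ F, ‖α i‖) '' {F | F.card = n})

/-- The decreasing rearrangement of a null sequence, 0-indexed: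
`rearr α n = α*_{n+1}`. -/
def rearr (α : ℕ → ℂ) (n : ℕ) : ℝ := rearrSum α (n + 1) - rearrSum α n

/-- A Calkin space: a linear subspace of `c₀` containing every null sequence whose
decreasing rearrangement is dominated termwise by that of one of its members. -/
def IsCalkinSpace (I : Set (ℕ → ℂ)) : Prop :=
  I ⊆ c0 ∧ (0 : ℕ → ℂ) ∈ I ∧
  (∀ α ∈ I, ∀ β ∈ I, α + β ∈ I) ∧
  (∀ (c : ℂ), ∀ α ∈ I, c • α ∈ I) ∧
  (∀ α ∈ I, ∀ β ∈ c0, (∀ n, rearr β n ≤ rearr α n) → β ∈ I)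

/-- `tensorSum α β n` is the supremum of `∑_{(i,j) ∈ F} |α i| |β j|` over finite
`F ⊆ ℕ × ℕ` with `|F| = n`; it equals `(α⊗β)₁ + ⋯ + (α⊗β)ₙ`. -/
def tensorSum (α β : ℕ → ℂ) (n : ℕ) : ℝ :=
  sSup ((fun F : Finset (ℕ × ℕ) => ∑ p ∈ F, ‖α p.1‖ * ‖β p.2‖) '' {F | F.card = n})

/-- The tensor sequence `α⊗β`: the decreasing rearrangement of the double sequence
`(|α_m β_n|)_{m,n}`, 0-indexed: `tensorSeq α β n = (α⊗β)_{n+1}`. -/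
def tensorSeq (α β : ℕ → ℂ) (n : ℕ) : ℝ := tensorSum α β (n + 1) - tensorSum α β n

/-- Embedding of real sequences into complex sequences. -/
def toC (f : ℕ → ℝ) : ℕ → ℂ := fun n => (f n : ℂ)

/-- The tensor product `𝔦⊗𝔧` of two Calkin spaces: the smallest Calkin space
containing `α⊗β` for all `α ∈ 𝔦`, `β ∈ 𝔧`. -/
def calkinTensor (I J : Set (ℕ → ℂ)) : Set (ℕ → ℂ) :=
  ⋂₀ {K | IsCalkinSpace K ∧ ∀ α ∈ I, ∀ β ∈ J, toC (tensorSeq α β) ∈ K}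

/-- A Calkin space `𝔦` is stable if `𝔦⊗𝔦 = 𝔦`. -/
def IsStableCalkin (I : Set (ℕ → ℂ)) : Prop := IsCalkinSpace I ∧ calkinTensor I I = I

/-- The principal Calkin space `⟨α⟩` generated by `α`: the smallest Calkin space
containing `α`. -/
def principalCalkin (α : ℕ → ℂ) : Set (ℕ → ℂ) := ⋂₀ {K | IsCalkinSpace K ∧ α ∈ K}

/-- `Kw ω α n = #{m : ω^{n+1} < α m ≤ ω^n}` (the sequence `α` being 0-indexed). -/
def Kw (ω : ℝ) (α : ℕ → ℝ) (n : ℕ) : ℕ :=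
  Set.ncard {m : ℕ | ω ^ (n + 1) < α m ∧ α m ≤ ω ^ n}

/-- `K̃ₙ = Σ_{i=0}^n Kᵢ`. -/
def Ktil (ω : ℝ) (α : ℕ → ℝ) (n : ℕ) : ℕ := ∑ i ∈ Finset.range (n + 1), Kw ω α i

/-- `Mₙ = Σ_{i+j=n} Kᵢ Kⱼ`. -/
def Mw (ω : ℝ) (α : ℕ → ℝ) (n : ℕ) : ℕ :=
  ∑ i ∈ Finset.range (n + 1), Kw ω α i * Kw ω α (n - i)

/-- `M̃ₙ = Σ_{i=0}^n Mᵢ`. -/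
def Mtil (ω : ℝ) (α : ℕ → ℝ) (n : ℕ) : ℕ := ∑ i ∈ Finset.range (n + 1), Mw ω α i

/-- The `n`-th approximation number of `T` (1-indexed: `approxNum T n = aₙ(T)` is the
infimum of `‖T - F‖` over bounded operators `F` of rank `< n`).  For operators between
Hilbert spaces this equals the `n`-th singular number. -/
def approxNum {X Y : Type*} [NormedAddCommGroup X] [NormedSpace ℂ X]
    [NormedAddCommGroup Y] [NormedSpace ℂ Y] (T : X →L[ℂ] Y) (n : ℕ) : ℝ :=
  sInf {c | ∃ F : X →L[ℂ] Y, LinearMap.rank (F : X →ₗ[ℂ] Y) < (n : Cardinal) ∧ c = ‖T - F‖}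

/-- The `n`-th Kolmogorov number `dₙ(T)` (1-indexed). -/
def kolNum {X Y : Type*} [NormedAddCommGroup X] [NormedSpace ℂ X]
    [NormedAddCommGroup Y] [NormedSpace ℂ Y] (T : X →L[ℂ] Y) (n : ℕ) : ℝ :=
  sInf {c | ∃ V : Submodule ℂ Y, Module.rank ℂ V < (n : Cardinal) ∧
    c = ⨆ x : {x : X // ‖x‖ ≤ 1}, ⨅ y : V, ‖T x.1 - (y : Y)‖}

/-- The `n`-th Hilbert number `hₙ(T)` (1-indexed): the supremum of `sₙ(A ∘ T ∘ B)` over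
all Hilbert spaces `K`, `H'` and all contractions `B : K → X`, `A : Y → H'`. -/
def hilbertNum {X Y : Type u} [NormedAddCommGroup X] [NormedSpace ℂ X]
    [NormedAddCommGroup Y] [NormedSpace ℂ Y] (T : X →L[ℂ] Y) (n : ℕ) : ℝ :=
  sSup {c | ∃ (K : Type u) (_ : NormedAddCommGroup K) (_ : InnerProductSpace ℂ K)
    (_ : CompleteSpace K) (H' : Type u) (_ : NormedAddCommGroup H')
    (_ : InnerProductSpace ℂ H') (_ : CompleteSpace H')
    (B : K →L[ℂ] X) (A : Y →L[ℂ] H'), ‖B‖ ≤ 1 ∧ ‖A‖ ≤ 1 ∧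
    c = approxNum ((A.comp T).comp B) n}

/-- The sequence of singular numbers of an operator, 0-indexed:
`sSeq T n = s_{n+1}(T) = a_{n+1}(T)`. -/
def sSeq {X Y : Type*} [NormedAddCommGroup X] [NormedSpace ℂ X]
    [NormedAddCommGroup Y] [NormedSpace ℂ Y] (T : X →L[ℂ] Y) : ℕ → ℝ :=
  fun n => approxNum T (n + 1)

/-- The multiplication operator `M_{a,b} : x ↦ a * x * b` on a normed algebra. -/
def Mop {A : Type*} [NonUnitalNormedRing A] [NormedSpace ℂ A] [IsScalarTower ℂ A A]
    [SMulCommClass ℂ A A] (a b : A) : A →L[ℂ] A :=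
  (ContinuousLinearMap.mul ℂ A a).comp ((ContinuousLinearMap.mul ℂ A).flip b)

/-! Composing `Φ` with the rank-one embedding `ξ ↦ ⟪f, ·⟫ ξ` of `H` into `𝒜` (possible as
`K(H) ⊆ 𝒜`) and with the evaluation `X ↦ X g` gives the operator `∑ⱼ ⟪f, Bⱼ g⟫ Aⱼ`; these two
maps have norms at most `‖f‖` and `‖g‖`, so `aₙ(∑ⱼ ⟪f, Bⱼ g⟫ Aⱼ) ≤ ‖f‖ ‖g‖ hₙ(Φ)`. Since the
`Bⱼ` are linearly independent, the functionals `u ↦ ⟪f, (∑ⱼ uⱼ Bⱼ) g⟫` span the dual of `ℂᵐ`,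
so for finitely many pairs `(gₖ, fₖ)`, `k < d`, every `Aᵢ` is a linear combination of the
corresponding `d` operators, and `a_{d(n-1)+1}(∑ₖ Sₖ) ≤ ∑ₖ aₙ(Sₖ)` gives the estimate.

For the Calkin space statement, `sₖ(Aᵢ) ≤ C h_{⌊k/r⌋+1}(Φ)`, and the dilated sequence
`k ↦ h_{⌊k/r⌋+1}` is the sum of its `r` restrictions to the residue classes mod `r`, each of
which has decreasing rearrangement dominated by `(hₙ₊₁)`. -/

theorem LinearMap.rank_add_lt_of_lt {K V V' : Type*} [DivisionRing K] [AddCommGroup V]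
    [Module K V] [AddCommGroup V'] [Module K V'] {F G : V →ₗ[K] V'} {m n : ℕ}
    (hF : F.rank < m) (hG : G.rank < n) : (F + G).rank < (m + n - 1 : ℕ) := by
  obtain ⟨k, hk⟩ := Cardinal.lt_aleph0.1 (hF.trans Cardinal.natCast_lt_aleph0)
  obtain ⟨l, hl⟩ := Cardinal.lt_aleph0.1 (hG.trans Cardinal.natCast_lt_aleph0)
  rw [hk, Nat.cast_lt] at hF
  rw [hl, Nat.cast_lt] at hG
  refine (rank_add_le F G).trans_lt ?_
  rw [hk, hl]
  exact_mod_cast (by omega : k + l < m + n - 1)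

section ApproximationNumbers

variable {X Y : Type*} [NormedAddCommGroup X] [NormedSpace ℂ X]
  [NormedAddCommGroup Y] [NormedSpace ℂ Y]

theorem rank_zero_lt {n : ℕ} (hn : 1 ≤ n) :
    LinearMap.rank ((0 : X →L[ℂ] Y) : X →ₗ[ℂ] Y) < n := by
  rw [ContinuousLinearMap.toLinearMap_zero, LinearMap.rank_zero]
  exact_mod_cast hn

theorem approxNum_nonneg (T : X →L[ℂ] Y) (n : ℕ) : 0 ≤ approxNum T n :=
  Real.sInf_nonneg (by rintro _ ⟨F, -, rfl⟩; positivity)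

theorem approxNum_le_norm_sub (T F : X →L[ℂ] Y) {n : ℕ}
    (hF : LinearMap.rank (F : X →ₗ[ℂ] Y) < n) : approxNum T n ≤ ‖T - F‖ :=
  csInf_le ⟨0, by rintro _ ⟨G, -, rfl⟩; positivity⟩ ⟨F, hF, rfl⟩

theorem le_approxNum {T : X →L[ℂ] Y} {n : ℕ} (hn : 1 ≤ n) {c : ℝ}
    (h : ∀ F : X →L[ℂ] Y, LinearMap.rank (F : X →ₗ[ℂ] Y) < n → c ≤ ‖T - F‖) :
    c ≤ approxNum T n :=
  le_csInf ⟨‖T‖, 0, rank_zero_lt hn, by simp⟩ (by rintro _ ⟨F, hF, rfl⟩; exact h F hF)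

theorem approxNum_le_norm (T : X →L[ℂ] Y) {n : ℕ} (hn : 1 ≤ n) : approxNum T n ≤ ‖T‖ := by
  simpa using approxNum_le_norm_sub T 0 (rank_zero_lt hn)

theorem approxNum_le_of_le (T : X →L[ℂ] Y) {m n : ℕ} (hm : 1 ≤ m) (hmn : m ≤ n) :
    approxNum T n ≤ approxNum T m :=
  le_approxNum hm fun F hF => approxNum_le_norm_sub T F (hF.trans_le (by exact_mod_cast hmn))

theorem sSeq_antitone (T : X →L[ℂ] Y) : Antitone (sSeq T) :=
  fun _ _ h => approxNum_le_of_le T (by omega) (by omega)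

theorem approxNum_add_le (S T : X →L[ℂ] Y) {m n : ℕ} (hm : 1 ≤ m) (hn : 1 ≤ n) :
    approxNum (S + T) (m + n - 1) ≤ approxNum S m + approxNum T n := by
  rw [← sub_le_iff_le_add]
  refine le_approxNum hm fun F hF => ?_
  rw [sub_le_comm]
  refine le_approxNum hn fun G hG => ?_
  rw [sub_le_iff_le_add']
  calc approxNum (S + T) (m + n - 1) ≤ ‖(S + T) - (F + G)‖ :=
        approxNum_le_norm_sub _ _ (LinearMap.rank_add_lt_of_lt hF hG)
    _ ≤ ‖S - F‖ + ‖T - G‖ := by rw [add_sub_add_comm]; exact norm_add_le _ _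

theorem approxNum_sum_le {ι : Type*} (s : Finset ι) (T : ι → X →L[ℂ] Y) {n : ℕ} (hn : 1 ≤ n) :
    approxNum (∑ i ∈ s, T i) (s.card * (n - 1) + 1) ≤ ∑ i ∈ s, approxNum (T i) n := by
  classical
  induction s using Finset.induction_on with
  | empty => simpa using approxNum_le_norm_sub (0 : X →L[ℂ] Y) 0 (rank_zero_lt le_rfl)
  | insert i s hi ih =>
    rw [Finset.sum_insert hi, Finset.sum_insert hi, Finset.card_insert_of_notMem hi,
      show (s.card + 1) * (n - 1) + 1 = n + (s.card * (n - 1) + 1) - 1 by rw [Nat.add_mul]; omega]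
    exact (approxNum_add_le _ _ hn (by omega)).trans (add_le_add le_rfl ih)

theorem approxNum_smul_le (c : ℂ) (T : X →L[ℂ] Y) {n : ℕ} (hn : 1 ≤ n) :
    approxNum (c • T) n ≤ ‖c‖ * approxNum T n := by
  rcases eq_or_ne c 0 with rfl | hc
  · simpa using approxNum_le_norm_sub (0 : X →L[ℂ] Y) 0 (rank_zero_lt hn)
  · have hc' : 0 < ‖c‖ := norm_pos_iff.2 hc
    rw [← div_le_iff₀' hc']
    refine le_approxNum hn fun F hF => ?_
    rw [div_le_iff₀' hc', ← norm_smul, smul_sub]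
    refine approxNum_le_norm_sub _ _ ?_
    rwa [ContinuousLinearMap.toLinearMap_smul, LinearMap.rank, LinearMap.range_smul _ _ hc]

theorem approxNum_sum_smul_le {ι : Type*} (s : Finset ι) (c : ι → ℂ) (T : ι → X →L[ℂ] Y)
    {n : ℕ} (hn : 1 ≤ n) :
    approxNum (∑ i ∈ s, c i • T i) (s.card * (n - 1) + 1) ≤
      ∑ i ∈ s, ‖c i‖ * approxNum (T i) n :=
  (approxNum_sum_le s _ hn).trans (Finset.sum_le_sum fun _ _ => approxNum_smul_le _ _ hn)

end ApproximationNumbers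

theorem exists_norm_le_one_smul_eq {E : Type*} [NormedAddCommGroup E] [NormedSpace ℂ E]
    (x : E) : ∃ y : E, ‖y‖ ≤ 1 ∧ x = (‖x‖ : ℂ) • y := by
  rcases eq_or_ne ‖x‖ 0 with hx | hx
  · exact ⟨0, by simp, by simp [norm_eq_zero.1 hx]⟩
  · refine ⟨(‖x‖⁻¹ : ℂ) • x, ?_, ?_⟩
    · rw [norm_smul, norm_inv, Complex.norm_real, Real.norm_of_nonneg (norm_nonneg x),
        inv_mul_cancel₀ hx]
    · rw [smul_smul, mul_inv_cancel₀ (by exact_mod_cast hx), one_smul]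

section HilbertNumbers

variable {X Y : Type u} [NormedAddCommGroup X] [NormedSpace ℂ X]
  [NormedAddCommGroup Y] [NormedSpace ℂ Y]

theorem hilbertNum_nonneg (T : X →L[ℂ] Y) (n : ℕ) : 0 ≤ hilbertNum T n :=
  Real.sSup_nonneg (by rintro _ ⟨_, _, _, _, _, _, _, _, _, _, -, -, rfl⟩; exact approxNum_nonneg _ _)

theorem approxNum_le_hilbertNum (T : X →L[ℂ] Y) {n : ℕ} (hn : 1 ≤ n)
    {K H' : Type u} [NormedAddCommGroup K] [InnerProductSpace ℂ K] [CompleteSpace K]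
    [NormedAddCommGroup H'] [InnerProductSpace ℂ H'] [CompleteSpace H']
    (B : K →L[ℂ] X) (A : Y →L[ℂ] H') (hB : ‖B‖ ≤ 1) (hA : ‖A‖ ≤ 1) :
    approxNum ((A.comp T).comp B) n ≤ hilbertNum T n := by
  apply le_csSup ⟨‖T‖, ?_⟩
  · exact ⟨K, inferInstance, inferInstance, inferInstance, H', inferInstance, inferInstance,
      inferInstance, B, A, hB, hA, rfl⟩
  · rintro _ ⟨_, _, _, _, _, _, _, _, B, A, hB, hA, rfl⟩
    refine (approxNum_le_norm _ hn).trans ?_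
    calc ‖(A.comp T).comp B‖ ≤ ‖A‖ * ‖T‖ * ‖B‖ :=
          ((A.comp T).opNorm_comp_le B).trans (by gcongr; exact A.opNorm_comp_le T)
      _ ≤ 1 * ‖T‖ * 1 := by gcongr
      _ = ‖T‖ := by ring

theorem hilbertNum_le_of_le (T : X →L[ℂ] Y) {m n : ℕ} (hm : 1 ≤ m) (hmn : m ≤ n) :
    hilbertNum T n ≤ hilbertNum T m :=
  Real.sSup_le (by
    rintro _ ⟨_, _, _, _, _, _, _, _, B, A, hB, hA, rfl⟩
    exact (approxNum_le_of_le _ hm hmn).trans (approxNum_le_hilbertNum T hm B A hB hA))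
    (hilbertNum_nonneg T m)

theorem hilbertNum_succ_antitone (T : X →L[ℂ] Y) : Antitone fun n => hilbertNum T (n + 1) :=
  fun _ _ h => hilbertNum_le_of_le T (by omega) (by omega)

theorem approxNum_comp_le_hilbertNum (T : X →L[ℂ] Y) {n : ℕ} (hn : 1 ≤ n)
    {K H' : Type u} [NormedAddCommGroup K] [InnerProductSpace ℂ K] [CompleteSpace K]
    [NormedAddCommGroup H'] [InnerProductSpace ℂ H'] [CompleteSpace H']
    (B : K →L[ℂ] X) (A : Y →L[ℂ] H') :
    approxNum ((A.comp T).comp B) n ≤ ‖A‖ * ‖B‖ * hilbertNum T n := by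
  obtain ⟨A', hA', hA⟩ := exists_norm_le_one_smul_eq A
  obtain ⟨B', hB', hB⟩ := exists_norm_le_one_smul_eq B
  have hcomp : (A.comp T).comp B = ((‖A‖ * ‖B‖ : ℝ) : ℂ) • (A'.comp T).comp B' := by
    conv_lhs => rw [hA, hB]
    simp only [ContinuousLinearMap.comp_smul, ContinuousLinearMap.smul_comp, smul_smul,
      Complex.ofReal_mul, mul_comm]
  rw [hcomp]
  refine (approxNum_smul_le _ _ hn).trans ?_
  rw [Complex.norm_real, Real.norm_of_nonneg (by positivity)]
  gcongr
  exact approxNum_le_hilbertNum T hn B' A' hB' hA'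

end HilbertNumbers

theorem isCompactOperator_rankOne {H : Type*} [NormedAddCommGroup H] [InnerProductSpace ℂ H]
    (ξ f : H) : IsCompactOperator (InnerProductSpace.rankOne ℂ ξ f) :=
  (isCompactOperator_of_locallyCompactSpace_rng (ContinuousLinearMap.toSpanSingleton ℂ ξ)).comp_clm
    (innerSL ℂ f)

section MatrixCoefficients

variable {ι E F : Type*} [Fintype ι] [NormedAddCommGroup E] [NormedSpace ℂ E]
  [NormedAddCommGroup F] [InnerProductSpace ℂ F]

/-- The functional `u ↦ ⟪y, (∑ⱼ uⱼ Bⱼ) x⟫` on coefficient vectors. -/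
def matrixCoeff (B : ι → E →L[ℂ] F) (x : E) (y : F) : Module.Dual ℂ (ι → ℂ) :=
  (innerSL ℂ y).toLinearMap ∘ₗ (ContinuousLinearMap.apply ℂ F x).toLinearMap ∘ₗ
    Fintype.linearCombination ℂ B

theorem matrixCoeff_single [DecidableEq ι] (B : ι → E →L[ℂ] F) (x : E) (y : F) (j : ι) :
    matrixCoeff B x y (Pi.single j 1) = inner ℂ y (B j x) := by
  simp [matrixCoeff, Fintype.linearCombination_apply_single]

theorem span_range_matrixCoeff_eq_top {B : ι → E →L[ℂ] F} (hB : LinearIndependent ℂ B) :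
    Submodule.span ℂ (Set.range fun p : E × F => matrixCoeff B p.1 p.2) = ⊤ := by
  refine Submodule.span_eq_top_of_ne_zero fun u hu => ?_
  have hT : Fintype.linearCombination ℂ B u ≠ 0 := fun h0 =>
    hu (funext (Fintype.linearIndependent_iff.1 hB u
      (by simpa [Fintype.linearCombination_apply] using h0)))
  obtain ⟨x, hx⟩ := DFunLike.ne_iff.1 hT
  exact ⟨_, ⟨(x, Fintype.linearCombination ℂ B u x), rfl⟩, by simpa [matrixCoeff] using hx⟩

theorem exists_biorthogonal_pairs [DecidableEq ι] {B : ι → E →L[ℂ] F}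
    (hB : LinearIndependent ℂ B) :
    ∃ (d : ℕ) (g : Fin d → E) (f : Fin d → F) (c : ι → Fin d → ℂ),
      ∀ i j, ∑ k, c i k * inner ℂ (f k) (B j (g k)) = if i = j then 1 else 0 := by
  obtain ⟨φ, hφ, hφspan, -⟩ := Submodule.exists_fun_fin_finrank_span_eq ℂ
    (Set.range fun p : E × F => matrixCoeff B p.1 p.2)
  choose p hp using hφ
  have hproj : ∀ i, ∃ c : Fin _ → ℂ, ∑ k, c k • φ k = LinearMap.proj i := fun i =>
    (Submodule.mem_span_range_iff_exists_fun ℂ).1 (by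
      rw [hφspan, span_range_matrixCoeff_eq_top hB]
      trivial)
  choose c hc using hproj
  refine ⟨_, fun k => (p k).1, fun k => (p k).2, c, fun i j => ?_⟩
  have := LinearMap.congr_fun (hc i) (Pi.single j 1)
  simp only [LinearMap.sum_apply, LinearMap.smul_apply, ← hp, matrixCoeff_single, smul_eq_mul,
    LinearMap.proj_apply] at this
  rw [this, Pi.single_apply]

end MatrixCoefficients

theorem sum_smul_sum_smul_eq_of_sum_mul_eq_ite {R M ι κ : Type*} [Semiring R] [AddCommMonoid M]
    [Module R M] [Fintype ι] [DecidableEq ι] [Fintype κ] {w : κ → ι → R} {c : κ → R} {i : ι}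
    (h : ∀ j, ∑ k, c k * w k j = if i = j then 1 else 0) (A : ι → M) :
    ∑ k, c k • ∑ j, w k j • A j = A i := by
  simp_rw [Finset.smul_sum, smul_smul]
  rw [Finset.sum_comm]
  simp_rw [← Finset.sum_smul, h, ite_smul, one_smul, zero_smul]
  simp

section ElementaryOperator

variable {H : Type u} [NormedAddCommGroup H] [InnerProductSpace ℂ H] [CompleteSpace H]
  (𝒜 : Submodule ℂ (H →L[ℂ] H)) {ι : Type*} [Fintype ι] (A B : ι → H →L[ℂ] H) (Φ : 𝒜 →L[ℂ] 𝒜)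

theorem approxNum_sum_inner_smul_le (h𝒜K : ∀ T : H →L[ℂ] H, IsCompactOperator ⇑T → T ∈ 𝒜)
    (hΦ : ∀ X : 𝒜, (Φ X : H →L[ℂ] H) = ∑ i, A i * (X : H →L[ℂ] H) * B i)
    (g f : H) {n : ℕ} (hn : 1 ≤ n) :
    approxNum (∑ j, inner ℂ f (B j g) • A j) n ≤ ‖g‖ * ‖f‖ * hilbertNum Φ n := by
  let θ : H →L[ℂ] 𝒜 := (ContinuousLinearMap.smulRightL ℂ H H (innerSL ℂ f)).codRestrict 𝒜
    fun ξ => h𝒜K _ (isCompactOperator_rankOne ξ f)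
  let ev : 𝒜 →L[ℂ] H := (ContinuousLinearMap.apply ℂ H g).comp 𝒜.subtypeL
  have hθ : ‖θ‖ ≤ ‖f‖ :=
    θ.opNorm_le_bound (norm_nonneg f) fun ξ => by
      show ‖InnerProductSpace.rankOne ℂ ξ f‖ ≤ _
      rw [InnerProductSpace.norm_rankOne, mul_comm]
  have hev : ‖ev‖ ≤ ‖g‖ :=
    ev.opNorm_le_bound (norm_nonneg g) fun X => by
      rw [mul_comm]
      exact (X : H →L[ℂ] H).le_opNorm g
  have hcomp : (ev.comp Φ).comp θ = ∑ j, inner ℂ f (B j g) • A j := by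
    ext ξ
    show (Φ (θ ξ) : H →L[ℂ] H) g = _
    simp [θ, hΦ]
  calc approxNum (∑ j, inner ℂ f (B j g) • A j) n = approxNum ((ev.comp Φ).comp θ) n := by
        rw [hcomp]
    _ ≤ ‖ev‖ * ‖θ‖ * hilbertNum Φ n := approxNum_comp_le_hilbertNum Φ hn θ ev
    _ ≤ ‖g‖ * ‖f‖ * hilbertNum Φ n := by gcongr; exact hilbertNum_nonneg Φ n

theorem approxNum_le_mul_hilbertNum_of_biorthogonal
    (h𝒜K : ∀ T : H →L[ℂ] H, IsCompactOperator ⇑T → T ∈ 𝒜)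
    (hΦ : ∀ X : 𝒜, (Φ X : H →L[ℂ] H) = ∑ i, A i * (X : H →L[ℂ] H) * B i)
    [DecidableEq ι] {d : ℕ} {g f : Fin d → H} {c : Fin d → ℂ} {i : ι}
    (hc : ∀ j, ∑ k, c k * inner ℂ (f k) (B j (g k)) = if i = j then 1 else 0)
    {n : ℕ} (hn : 1 ≤ n) :
    approxNum (A i) (d * (n - 1) + 1) ≤ (∑ k, ‖c k‖ * (‖g k‖ * ‖f k‖)) * hilbertNum Φ n := by
  have hAi := sum_smul_sum_smul_eq_of_sum_mul_eq_ite hc A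
  calc approxNum (A i) (d * (n - 1) + 1)
      ≤ ∑ k, ‖c k‖ * approxNum (∑ j, inner ℂ (f k) (B j (g k)) • A j) n := by
        have := approxNum_sum_smul_le Finset.univ c
          (fun k => ∑ j, inner ℂ (f k) (B j (g k)) • A j) hn
        rwa [hAi, Finset.card_univ, Fintype.card_fin] at this
    _ ≤ ∑ k, ‖c k‖ * (‖g k‖ * ‖f k‖ * hilbertNum Φ n) := by
        gcongr with k
        exact approxNum_sum_inner_smul_le 𝒜 A B Φ h𝒜K hΦ (g k) (f k) hn
    _ = (∑ k, ‖c k‖ * (‖g k‖ * ‖f k‖)) * hilbertNum Φ n := by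
        simp only [Finset.sum_mul, mul_assoc]

end ElementaryOperator

section Rearrangement

theorem norm_toC {f : ℕ → ℝ} (hf : ∀ k, 0 ≤ f k) (k : ℕ) : ‖toC f k‖ = f k := by
  simp [toC, abs_of_nonneg (hf k)]

theorem norm_ite_ofReal_le {p : Prop} [Decidable p] {x : ℝ} (hx : 0 ≤ x) :
    ‖if p then (x : ℂ) else 0‖ ≤ x := by
  split_ifs <;> simp [abs_of_nonneg hx, hx]

theorem sum_le_sum_range_card_of_antitone {f : ℕ → ℝ} (hf : Antitone f) (F : Finset ℕ) :
    ∑ i ∈ F, f i ≤ ∑ k ∈ Finset.range F.card, f k := by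
  induction F using Finset.induction_on_max with
  | empty => simp
  | insert a s ha ih =>
    have hcard : s.card ≤ a := by
      simpa using Finset.card_le_card fun x hx => Finset.mem_range.2 (ha x hx)
    rw [Finset.sum_insert fun h => (ha a h).false, Finset.card_insert_of_notMem
      fun h => (ha a h).false, Finset.sum_range_succ, add_comm]
    exact add_le_add ih (hf hcard)

theorem le_rearrSum {β : ℕ → ℂ} (hβ : BddAbove (Set.range fun k => ‖β k‖)) (F : Finset ℕ) :
    ∑ i ∈ F, ‖β i‖ ≤ rearrSum β F.card := by
  obtain ⟨M, hM⟩ := hβ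
  refine le_csSup ⟨F.card * M, ?_⟩ ⟨F, rfl, rfl⟩
  rintro _ ⟨G, hG, rfl⟩
  change G.card = F.card at hG
  rw [← hG, ← nsmul_eq_mul]
  exact Finset.sum_le_card_nsmul _ _ _ fun i _ => hM ⟨i, rfl⟩

theorem rearr_toC_of_antitone {f : ℕ → ℝ} (hf0 : ∀ k, 0 ≤ f k) (hf : Antitone f) (n : ℕ) :
    rearr (toC f) n = f n := by
  have hsum : ∀ n, rearrSum (toC f) n = ∑ k ∈ Finset.range n, f k := fun n => by
    refine le_antisymm (csSup_le ⟨_, Finset.range n, Finset.card_range n, rfl⟩ ?_) ?_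
    · rintro _ ⟨F, rfl, rfl⟩
      simpa [norm_toC hf0] using sum_le_sum_range_card_of_antitone hf F
    · have hbdd : BddAbove (Set.range fun k => ‖toC f k‖) :=
        ⟨f 0, by rintro _ ⟨k, rfl⟩; exact (norm_toC hf0 k).trans_le (hf k.zero_le)⟩
      simpa [norm_toC hf0] using le_rearrSum hbdd (Finset.range n)
  rw [rearr, hsum, hsum, Finset.sum_range_succ, add_sub_cancel_left]

theorem rearr_le_of_card_le {β : ℕ → ℂ} (hβ : BddAbove (Set.range fun k => ‖β k‖)) {t : ℝ}
    {n : ℕ} (h : ∀ F : Finset ℕ, (∀ k ∈ F, t < ‖β k‖) → F.card ≤ n) :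
    rearr β n ≤ t := by
  rw [rearr, sub_le_iff_le_add']
  refine csSup_le ⟨_, Finset.range (n + 1), Finset.card_range _, rfl⟩ ?_
  rintro _ ⟨F, hF, rfl⟩
  change F.card = n + 1 at hF
  obtain ⟨k, hkF, hk⟩ : ∃ k ∈ F, ‖β k‖ ≤ t := by
    by_contra! hlarge
    have := h F hlarge
    omega
  show ∑ i ∈ F, ‖β i‖ ≤ _
  rw [← Finset.sum_erase_add F _ hkF]
  have hcard : (F.erase k).card = n := by simp_all
  exact add_le_add (hcard ▸ le_rearrSum hβ _) hk

theorem rearr_ite_mod_le {h : ℕ → ℝ} (h0 : ∀ k, 0 ≤ h k) (hh : Antitone h) (r j n : ℕ) :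
    rearr (fun k => if k % r = j then (h (k / r) : ℂ) else 0) n ≤ h n := by
  refine rearr_le_of_card_le ⟨h 0, ?_⟩ fun F hF => ?_
  · rintro _ ⟨k, rfl⟩
    exact (norm_ite_ofReal_le (h0 _)).trans (hh (Nat.zero_le _))
  have hmem : ∀ k ∈ F, k % r = j ∧ k / r < n := fun k hk => by
    have hlt := hF k hk
    by_cases hkj : k % r = j
    · rw [if_pos hkj, Complex.norm_real, Real.norm_of_nonneg (h0 _)] at hlt
      exact ⟨hkj, hh.reflect_lt hlt⟩
    · rw [if_neg hkj, norm_zero] at hlt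
      exact absurd hlt (h0 n).not_gt
  simpa using Finset.card_le_card_of_injOn (t := Finset.range n) (· / r)
    (fun k hk => Finset.mem_range.2 (hmem k hk).2) fun k hk l hl hkl => by
      rw [← Nat.div_add_mod k r, ← Nat.div_add_mod l r, (hmem k hk).1, (hmem l hl).1]
      simp_all

end Rearrangement

namespace IsCalkinSpace

variable {I : Set (ℕ → ℂ)}

theorem toC_comp_div_mem (hI : IsCalkinSpace I) {h : ℕ → ℝ} (h0 : ∀ k, 0 ≤ h k)
    (hh : Antitone h) (hhI : toC h ∈ I) {r : ℕ} (hr : 0 < r) :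
    toC (fun k => h (k / r)) ∈ I := by
  obtain ⟨hc0, h0I, hadd, -, hdom⟩ := hI
  have htend : Filter.Tendsto (fun k => h (k / r)) Filter.atTop (nhds 0) := by
    have := (tendsto_zero_iff_norm_tendsto_zero.1 (hc0 hhI)).comp
      (Nat.tendsto_div_const_atTop hr.ne')
    simpa [Function.comp_def, norm_toC h0] using this
  let γ : ℕ → ℕ → ℂ := fun j k => if k % r = j then (h (k / r) : ℂ) else 0
  have hγ : ∀ j, γ j ∈ I := fun j =>
    hdom _ hhI _ (squeeze_zero_norm (fun k => norm_ite_ofReal_le (h0 _)) htend) fun n => by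
      rw [rearr_toC_of_antitone h0 hh]
      exact rearr_ite_mod_le h0 hh r j n
  have hsum : toC (fun k => h (k / r)) = ∑ j ∈ Finset.range r, γ j := by
    funext k
    rw [Finset.sum_apply, Finset.sum_eq_single (k % r)]
    · simp [γ, toC]
    · intro j _ hj
      simp [γ, Ne.symm hj]
    · exact fun hk => absurd (Finset.mem_range.2 (Nat.mod_lt k hr)) hk
  rw [hsum]
  exact Finset.sum_induction _ (· ∈ I) (fun a b ha hb => hadd a ha b hb) h0I fun j _ => hγ j

theorem toC_mem_of_le_mul_comp_div (hI : IsCalkinSpace I) {s h : ℕ → ℝ} (hs0 : ∀ k, 0 ≤ s k)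
    (hs : Antitone s) (h0 : ∀ k, 0 ≤ h k) (hh : Antitone h) (hhI : toC h ∈ I) {r : ℕ}
    (hr : 0 < r) {C : ℝ} (hC : 0 ≤ C) (hsh : ∀ k, s k ≤ C * h (k / r)) : toC s ∈ I := by
  have hdil := hI.toC_comp_div_mem h0 hh hhI hr
  obtain ⟨hc0, -, -, hsmul, hdom⟩ := hI
  let t : ℕ → ℝ := fun k => C * h (k / r)
  have ht0 : ∀ k, 0 ≤ t k := fun k => mul_nonneg hC (h0 _)
  have ht : Antitone t := fun a b hab =>
    mul_le_mul_of_nonneg_left (hh (Nat.div_le_div_right hab)) hC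
  have htI : toC t ∈ I := by
    convert hsmul C _ hdil using 1
    funext k
    simp [t, toC]
  have hs_c0 : toC s ∈ c0 := squeeze_zero_norm (fun k => (norm_toC hs0 k).trans_le
    ((hsh k).trans (norm_toC ht0 k).ge)) (tendsto_zero_iff_norm_tendsto_zero.1 (hc0 htI))
  refine hdom _ htI _ hs_c0 fun n => ?_
  rw [rearr_toC_of_antitone hs0 hs, rearr_toC_of_antitone ht0 ht]
  exact hsh n

end IsCalkinSpace

theorem symbols_dominated_by_hilbertNum_general {H : Type u} [NormedAddCommGroup H]
    [InnerProductSpace ℂ H] [CompleteSpace H]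
    (𝒜 : Submodule ℂ (H →L[ℂ] H))
    (h𝒜K : ∀ T : H →L[ℂ] H, IsCompactOperator ⇑T → T ∈ 𝒜)
    (m : ℕ) (A B : Fin m → H →L[ℂ] H)
    (Φ : 𝒜 →L[ℂ] 𝒜)
    (hΦ : ∀ X : 𝒜, (Φ X : H →L[ℂ] H) = ∑ i, A i * (X : H →L[ℂ] H) * B i)
    (hBli : LinearIndependent ℂ B) :
    (∃ r : ℕ, 0 < r ∧ ∃ C : ℝ, 0 < C ∧ ∀ n : ℕ, 1 ≤ n → ∀ i : Fin m,
      approxNum (A i) (r * n - r + 1) ≤ C * hilbertNum Φ n) ∧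
    (∀ I : Set (ℕ → ℂ), IsCalkinSpace I →
      toC (fun n => hilbertNum Φ (n + 1)) ∈ I → ∀ i : Fin m, toC (sSeq (A i)) ∈ I) := by
  obtain ⟨d, g, f, c, hc⟩ := exists_biorthogonal_pairs hBli
  let K : Fin m → ℝ := fun i => ∑ k, ‖c i k‖ * (‖g k‖ * ‖f k‖)
  have hpart1 : ∃ r : ℕ, 0 < r ∧ ∃ C : ℝ, 0 < C ∧ ∀ n : ℕ, 1 ≤ n → ∀ i : Fin m,
      approxNum (A i) (r * n - r + 1) ≤ C * hilbertNum Φ n := by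
    refine ⟨d + 1, d.succ_pos, 1 + ∑ i, K i, by positivity, fun n hn i => ?_⟩
    calc approxNum (A i) ((d + 1) * n - (d + 1) + 1) ≤ approxNum (A i) (d * (n - 1) + 1) :=
          approxNum_le_of_le _ (by omega) (by rw [← Nat.mul_sub_one]; gcongr; omega)
      _ ≤ K i * hilbertNum Φ n :=
          approxNum_le_mul_hilbertNum_of_biorthogonal 𝒜 A B Φ h𝒜K hΦ (hc i) hn
      _ ≤ (1 + ∑ i, K i) * hilbertNum Φ n := by
          gcongr
          · exact hilbertNum_nonneg Φ n
          · exact (Finset.single_le_sum (fun i _ => by positivity) (Finset.mem_univ i)).trans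
              (le_add_of_nonneg_left zero_le_one)
  refine ⟨hpart1, fun I hI hΦI i => ?_⟩
  obtain ⟨r, hr, C, hC, hle⟩ := hpart1
  have hsh : ∀ k, sSeq (A i) k ≤ C * hilbertNum Φ (k / r + 1) := fun k => by
    have := hle (k / r + 1) (Nat.le_add_left 1 _) i
    rw [Nat.mul_succ, Nat.add_sub_cancel] at this
    exact (sSeq_antitone (A i) (Nat.mul_div_le k r)).trans this
  exact hI.toC_mem_of_le_mul_comp_div (fun k => approxNum_nonneg _ _) (sSeq_antitone _)
    (fun k => hilbertNum_nonneg Φ _) (hilbertNum_succ_antitone Φ) hΦI hr hC.le hsh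

/-- Let `𝒜` be a C*-subalgebra of `B(H)` containing `K(H)`, let
`A₁,…,Aₘ,B₁,…,Bₘ ∈ 𝒜` and `Φ = Σᵢ M_{Aᵢ,Bᵢ} : 𝒜 → 𝒜`.  If `B₁,…,Bₘ` are linearly
independent, then there are `r ≥ 1` and `C > 0` with
`a_{rn−r+1}(Aᵢ) ≤ C hₙ(Φ)` for all `n ≥ 1` and all `i`; in particular, if `𝔦` is a
Calkin space containing `(hₙ(Φ))ₙ` then `(aₙ(Aᵢ))ₙ ∈ 𝔦` for every `i`. -/
theorem symbols_dominated_by_hilbertNum {H : Type u} [NormedAddCommGroup H]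
    [InnerProductSpace ℂ H] [CompleteSpace H]
    (𝒜 : Submodule ℂ (H →L[ℂ] H))
    (h𝒜mul : ∀ x ∈ 𝒜, ∀ y ∈ 𝒜, x * y ∈ 𝒜)
    (h𝒜star : ∀ x ∈ 𝒜, star x ∈ 𝒜)
    (h𝒜closed : IsClosed (𝒜 : Set (H →L[ℂ] H)))
    (h𝒜K : ∀ T : H →L[ℂ] H, IsCompactOperator ⇑T → T ∈ 𝒜)
    (m : ℕ) (A B : Fin m → H →L[ℂ] H)
    (hA : ∀ i, A i ∈ 𝒜) (hB : ∀ i, B i ∈ 𝒜)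
    (Φ : 𝒜 →L[ℂ] 𝒜)
    (hΦ : ∀ X : 𝒜, (Φ X : H →L[ℂ] H) = ∑ i, A i * (X : H →L[ℂ] H) * B i)
    (hBli : LinearIndependent ℂ B) :
    (∃ r : ℕ, 0 < r ∧ ∃ C : ℝ, 0 < C ∧ ∀ n : ℕ, 1 ≤ n → ∀ i : Fin m,
      approxNum (A i) (r * n - r + 1) ≤ C * hilbertNum Φ n) ∧
    (∀ I : Set (ℕ → ℂ), IsCalkinSpace I →
      toC (fun n => hilbertNum Φ (n + 1)) ∈ I → ∀ i : Fin m, toC (sSeq (A i)) ∈ I) :=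
  symbols_dominated_by_hilbertNum_general 𝒜 h𝒜K m A B Φ hΦ hBli
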